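/- Let X be a simplicial set and let c be a k-sphere in X (k ≥ 1) with all faces c_0, …, c_k degenerate. Let r be the minimal value of dgn(c_i) over 0 ≤ i ≤ k and let m be the smallest ordinal with dgn(c_m) = r. If m reduces c_m, then m properly reduces c_m and c_m = c_{m+1}. -/

import Mathlib

/-!
Write `c_m = y ε` with `ε : [K+1] ⟶ [k]` an epimorphism and `k` minimal. Since `m` reduces `c_m`,
`ε` identifies `m` with a neighbour, so `c_m` lies in the image of `σ_{m-1}` or of `σ_m`.
The first is impossible: the cycle equation `c_m δ_{m-1} = c_{m-1} δ_{m-1}` would give `c_{m-1}`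
degeneracy `r`, against the choice of `m`. So `c_m = c_m δ_m σ_m`. The cycle equation
`c_{m+1} δ_m = c_m δ_m` then shows that `c_{m+1}` also has degeneracy `r` and is reduced by `m`;
the same argument gives `c_{m+1} = c_{m+1} δ_m σ_m = c_m δ_m σ_m = c_m`.
-/

open CategoryTheory Simplicial

namespace AufhebungSSet

/-- An `n`-simplex `x` of a simplicial set `X` is degenerate if it is the image of a
simplex of strictly smaller dimension under the action of an epimorphism of `Δ`. -/
def IsDegen (X : SSet) {n : ℕ} (x : X _⦋n⦌) : Prop :=
  ∃ m : ℕ, m < n ∧ ∃ ε : (⦋n⦌ : SimplexCategory) ⟶ ⦋m⦌,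
    Function.Surjective ε.toOrderHom ∧ ∃ y : X _⦋m⦌, x = X.map ε.op y

/-- The degeneracy `dgn x = n - k`, where `k` is the least dimension from which `x`
is the image of a simplex under the action of an epimorphism; by the Eilenberg–Zilber
lemma this is the dimension of the nondegenerate simplex of which `x` is a degeneracy. -/
noncomputable def dgn (X : SSet) {n : ℕ} (x : X _⦋n⦌) : ℕ :=
  n - sInf (setOf fun k : ℕ => ∃ ε : (⦋n⦌ : SimplexCategory) ⟶ ⦋k⦌,
    Function.Surjective ε.toOrderHom ∧ ∃ y : X _⦋k⦌, x = X.map ε.op y)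

/-- `i` reduces `x` when `dgn (x δᵢ) = dgn x - 1`. -/
def Reduces (X : SSet) {n : ℕ} (i : Fin (n + 2)) (x : X _⦋n + 1⦌) : Prop :=
  dgn X (X.map (SimplexCategory.δ i).op x) + 1 = dgn X x

/-- `i` properly reduces `x` when `x = x δᵢ σᵢ`. -/
def ProperlyReduces (X : SSet) {n : ℕ} (i : Fin (n + 1)) (x : X _⦋n + 1⦌) : Prop :=
  x = X.map (SimplexCategory.σ i).op (X.map (SimplexCategory.δ i.castSucc).op x)

/-- A `(K+2)`-sphere: a family `c₀, …, c_{K+2}` of `(K+1)`-simplices satisfying the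
cycle equations `cⱼ δᵢ = cᵢ δ_{j-1}` for `i < j` (here reindexed: `c_{j+1} δᵢ = cᵢ δⱼ`
for `i ≤ j`). -/
def IsSphere (X : SSet) {K : ℕ} (c : Fin (K + 3) → X _⦋K + 1⦌) : Prop :=
  ∀ i j : Fin (K + 2), i ≤ j →
    X.map (SimplexCategory.δ i).op (c j.succ) = X.map (SimplexCategory.δ j).op (c i.castSucc)

/-- `y` fills the sphere `c` when `y δᵢ = cᵢ` for all `i`. -/
def IsFiller (X : SSet) {K : ℕ} (y : X _⦋K + 2⦌) (c : Fin (K + 3) → X _⦋K + 1⦌) : Prop :=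
  ∀ i : Fin (K + 3), X.map (SimplexCategory.δ i).op y = c i

open SimplexCategory

lemma Monotone.exists_apply_castSucc_eq_apply_succ {α : Type*} [PartialOrder α] {n : ℕ}
    {f : Fin (n + 2) → α} (hf : Monotone f) {i j : Fin (n + 2)} (hji : j ≠ i) (h : f j = f i) :
    ∃ p : Fin (n + 1), (p.castSucc = i ∨ p.succ = i) ∧ f p.castSucc = f p.succ := by
  rcases hji.lt_or_gt with hlt | hlt
  · have hi : i ≠ 0 := (Fin.pos_of_ne_zero (ne_bot_of_gt hlt)).ne'
    refine ⟨i.pred hi, .inr (Fin.succ_pred i hi), le_antisymm (hf (Fin.castSucc_le_succ _)) ?_⟩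
    rw [Fin.succ_pred, ← h]
    exact hf (Fin.le_castSucc_iff.2 (by rwa [Fin.succ_pred]))
  · have hi : i ≠ Fin.last _ := (lt_top_of_lt hlt).ne
    refine ⟨i.castPred hi, .inl (Fin.castSucc_castPred i hi),
      le_antisymm (hf (Fin.castSucc_le_succ _)) ?_⟩
    rw [Fin.castSucc_castPred, ← h]
    exact hf (Fin.castSucc_lt_iff_succ_le.1 (by rwa [Fin.castSucc_castPred]))

def epiDims (X : SSet) {n : ℕ} (x : X _⦋n⦌) : Set ℕ :=
  {k | ∃ ε : ⦋n⦌ ⟶ ⦋k⦌, Function.Surjective ε.toOrderHom ∧ ∃ y : X _⦋k⦌, x = X.map ε.op y}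

section epiDims

variable {X : SSet}

lemma dgn_eq_sub_sInf_epiDims {n : ℕ} (x : X _⦋n⦌) : dgn X x = n - sInf (epiDims X x) := rfl

lemma self_mem_epiDims {n : ℕ} (x : X _⦋n⦌) : n ∈ epiDims X x :=
  ⟨𝟙 _, fun b => ⟨b, rfl⟩, x, by simp⟩

lemma sInf_epiDims_le {n : ℕ} (x : X _⦋n⦌) : sInf (epiDims X x) ≤ n :=
  Nat.sInf_le (self_mem_epiDims x)

lemma sInf_epiDims_mem {n : ℕ} (x : X _⦋n⦌) : sInf (epiDims X x) ∈ epiDims X x :=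
  Nat.sInf_mem ⟨n, self_mem_epiDims x⟩

lemma mem_epiDims_map {n m k : ℕ} {f : ⦋n⦌ ⟶ ⦋m⦌} (hf : Function.Surjective f.toOrderHom)
    {y : X _⦋m⦌} (hk : k ∈ epiDims X y) : k ∈ epiDims X (X.map f.op y) := by
  obtain ⟨ε, hε, z, rfl⟩ := hk
  exact ⟨f ≫ ε, hε.comp hf, z, by rw [op_comp, Functor.map_comp_apply]⟩

/-- Peel off the faces `δ` through which `f` factors until it becomes surjective. -/
lemma sInf_epiDims_map_le {n k : ℕ} (f : ⦋n⦌ ⟶ ⦋k⦌) (y : X _⦋k⦌) :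
    sInf (epiDims X (X.map f.op y)) ≤ k := by
  induction k with
  | zero => exact Nat.sInf_le ⟨f, fun b => ⟨0, Subsingleton.elim (α := Fin 1) _ _⟩, y, rfl⟩
  | succ k ih =>
    by_cases hf : Function.Surjective f.toOrderHom
    · exact Nat.sInf_le ⟨f, hf, y, rfl⟩
    · obtain ⟨v, g, rfl⟩ := eq_comp_δ_of_not_surjective f hf
      rw [op_comp, Functor.map_comp_apply]
      exact (ih g _).trans k.le_succ

lemma sInf_epiDims_δ_le {n : ℕ} (x : X _⦋n + 1⦌) (i : Fin (n + 2)) :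
    sInf (epiDims X (X.map (δ i).op x)) ≤ sInf (epiDims X x) := by
  suffices ∀ k ∈ epiDims X x, sInf (epiDims X (X.map (δ i).op x)) ≤ k from
    this _ (sInf_epiDims_mem x)
  rintro k ⟨ε, -, y, rfl⟩
  rw [← Functor.map_comp_apply, ← op_comp]
  exact sInf_epiDims_map_le _ y

lemma dgn_le_dgn_δ_add_one {n : ℕ} (x : X _⦋n + 1⦌) (i : Fin (n + 2)) :
    dgn X x ≤ dgn X (X.map (δ i).op x) + 1 := by
  have := sInf_epiDims_δ_le x i
  rw [dgn_eq_sub_sInf_epiDims, dgn_eq_sub_sInf_epiDims]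
  omega

lemma reduces_iff {n : ℕ} (x : X _⦋n + 1⦌) (i : Fin (n + 2)) :
    Reduces X i x ↔ sInf (epiDims X (X.map (δ i).op x)) = sInf (epiDims X x) := by
  have := sInf_epiDims_δ_le x i
  have := sInf_epiDims_le (X.map (δ i).op x)
  rw [Reduces, dgn_eq_sub_sInf_epiDims, dgn_eq_sub_sInf_epiDims]
  omega

lemma properlyReduces_map_σ {n : ℕ} (p : Fin (n + 1)) (z : X _⦋n⦌) :
    ProperlyReduces X p (X.map (σ p).op z) :=
  (congrArg _ (SSet.δ_comp_σ_self_apply p z)).symm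

lemma ProperlyReduces.reduces {n : ℕ} {p : Fin (n + 1)} {x : X _⦋n + 1⦌}
    (h : ProperlyReduces X p x) : Reduces X p.castSucc x := by
  have hmem := mem_epiDims_map (f := σ p) (Fin.predAbove_surjective p)
    (sInf_epiDims_mem (X.map (δ p.castSucc).op x))
  rw [← h] at hmem
  exact (reduces_iff x _).2 (le_antisymm (sInf_epiDims_δ_le x _) (Nat.sInf_le hmem))

/-- The minimal `ε : [n+1] ⟶ [k]` with `x = y ε` cannot separate `i` from all other vertices,
else `x δᵢ` would come from dimension `k - 1`. -/
lemma Reduces.exists_properlyReduces {n : ℕ} {i : Fin (n + 2)} {x : X _⦋n + 1⦌}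
    (h : Reduces X i x) :
    ∃ p : Fin (n + 1), (p.castSucc = i ∨ p.succ = i) ∧ ProperlyReduces X p x := by
  suffices ∀ k ∈ epiDims X x, sInf (epiDims X (X.map (δ i).op x)) = k →
      ∃ p : Fin (n + 1), (p.castSucc = i ∨ p.succ = i) ∧ ProperlyReduces X p x from
    this _ (sInf_epiDims_mem x) ((reduces_iff x i).1 h)
  rintro k ⟨ε, -, y, rfl⟩ hk
  have hsurj : Function.Surjective (δ i ≫ ε).toOrderHom := by
    by_contra hns
    cases k with
    | zero => exact hns fun _ => ⟨0, Subsingleton.elim (α := Fin 1) _ _⟩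
    | succ k =>
      obtain ⟨v, g, hg⟩ := eq_comp_δ_of_not_surjective _ hns
      have hle := sInf_epiDims_map_le g (X.map (δ v).op y)
      rw [← Functor.map_comp_apply, ← op_comp, ← hg, op_comp, Functor.map_comp_apply, hk] at hle
      omega
  obtain ⟨a, ha⟩ := hsurj (ε.toOrderHom i)
  obtain ⟨p, hp, hεp⟩ :=
    Monotone.exists_apply_castSucc_eq_apply_succ ε.toOrderHom.monotone
      (Fin.succAbove_ne i a) ha
  obtain ⟨θ, rfl⟩ := eq_σ_comp_of_not_injective' ε p hεp
  refine ⟨p, hp, ?_⟩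
  rw [op_comp, Functor.map_comp_apply]
  exact properlyReduces_map_σ p _

end epiDims
section IsSphere

variable {X : SSet} {K : ℕ} {c : Fin (K + 3) → X _⦋K + 1⦌}

lemma IsSphere.dgn_le_of_properlyReduces (hc : IsSphere X c) {p : Fin (K + 1)}
    {j : Fin (K + 2)} (hpj : p.castSucc ≤ j) (h : ProperlyReduces X p (c j.succ)) :
    dgn X (c p.castSucc.castSucc) ≤ dgn X (c j.succ) :=
  calc dgn X (c p.castSucc.castSucc)
      ≤ dgn X (X.map (δ j).op (c p.castSucc.castSucc)) + 1 := dgn_le_dgn_δ_add_one _ _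
    _ = dgn X (X.map (δ p.castSucc).op (c j.succ)) + 1 := by rw [hc _ _ hpj]
    _ = dgn X (c j.succ) := h.reduces

lemma IsSphere.dgn_succ_le (hc : IsSphere X c) (i : Fin (K + 2)) :
    dgn X (c i.succ) ≤ dgn X (X.map (δ i).op (c i.castSucc)) + 1 :=
  hc i i le_rfl ▸ dgn_le_dgn_δ_add_one _ _

end IsSphere

/-- If all faces of a sphere `c` are degenerate, `r` is the minimal degeneracy,
`m` is the first face of degeneracy `r`, and `m` reduces `c_m`, then `m` properly
reduces `c_m` and `c_m = c_{m+1}`. -/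
theorem techlem_c (X : SSet) (K : ℕ) (c : Fin (K + 3) → X _⦋K + 1⦌) (hc : IsSphere X c)
    (r : ℕ) (hr : ∀ u : Fin (K + 3), r ≤ dgn X (c u))
    (m : Fin (K + 3)) (hm : dgn X (c m) = r)
    (hmmin : ∀ u : Fin (K + 3), dgn X (c u) = r → m ≤ u)
    (hmlt : (m : ℕ) < K + 2) (hred : Reduces X ⟨(m : ℕ), hmlt⟩ (c m)) :
    (∃ h : (m : ℕ) < K + 1, ProperlyReduces X ⟨(m : ℕ), h⟩ (c m)) ∧
      c m = c ⟨(m : ℕ) + 1, by omega⟩ := by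
  set i : Fin (K + 2) := ⟨m, hmlt⟩
  -- otherwise `c_{m-1}` would have degeneracy `r`
  have not_pred : ∀ (p : Fin (K + 1)) (j : Fin (K + 2)), p.succ = i → p.castSucc ≤ j →
      dgn X (c j.succ) = r → ¬ ProperlyReduces X p (c j.succ) := fun p j hpi hpj hj h => by
    have := hmmin _ (le_antisymm ((hc.dgn_le_of_properlyReduces hpj h).trans hj.le) (hr _))
    simp only [Fin.le_def, Fin.val_castSucc, Fin.ext_iff, Fin.val_succ, i] at this hpi
    omega
  obtain ⟨p, hp, hpr⟩ := hred.exists_properlyReduces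
  have hpi : p.castSucc = i := hp.resolve_right fun hpi => by
    have hpm : p.castSucc.succ = m := by rw [Fin.succ_castSucc, hpi]; rfl
    exact not_pred p _ hpi le_rfl (hpm ▸ hm) (hpm ▸ hpr)
  have hδ : X.map (δ i).op (c i.succ) = X.map (δ i).op (c m) := hc i i le_rfl
  have hm_succ : dgn X (c i.succ) = r := le_antisymm
    ((hc.dgn_succ_le i).trans (hpi ▸ hpr.reduces).le |>.trans hm.le) (hr _)
  have hred_succ : Reduces X i (c i.succ) := by
    rw [Reduces, hδ, hm_succ, ← hm]
    exact hpi ▸ hpr.reduces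
  obtain ⟨q, hq, hqr⟩ := hred_succ.exists_properlyReduces
  have hqp : q = p := Fin.castSucc_injective _ <| hpi ▸ hq.resolve_right fun hqi =>
    not_pred q i hqi (hqi ▸ Fin.castSucc_le_succ q) hm_succ hqr
  have hp_val : (p : ℕ) = m := congrArg Fin.val hpi
  refine ⟨⟨hp_val ▸ p.isLt, ?_⟩, ?_⟩
  · rwa [show (⟨(m : ℕ), _⟩ : Fin (K + 1)) = p from Fin.ext hp_val.symm]
  · calc c m = X.map (σ p).op (X.map (δ i).op (c m)) := hpi ▸ hpr
      _ = X.map (σ q).op (X.map (δ q.castSucc).op (c i.succ)) := by rw [hqp, hpi, hδ]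
      _ = c i.succ := hqr.symm

end AufhebungSSet
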